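/- arXiv:math-ph/0102027 — 2 statements merged into one kernel-verified Lean document; each statement's English description precedes it below -/
import Mathlib

section
/- Let d ≥ 2 and r > 0. Let Λ : ℝ^d → ℝ^d be a linear map satisfying η(Λp, Λq) = η(p, q) for all p, q ∈ ℝ^d, and suppose Λ is orthochronous in the sense that (Λp)⁰ > 0 for every p with η(p, p) < 0 and p⁰ > 0. Then the pushforward of the forward mass-shell measure μ_r^+ under Λ equals μ_r^+ (Lorentz invariance of the mass-shell measure). -/
open MeasureTheory

noncomputable section

/-- Minkowski inner product on `ℝ^{m+1}`: `η(p,q) = -p⁰q⁰ + Σ_{j=1}^{m} pʲqʲ`. -/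
def eta {m : ℕ} (p q : EuclideanSpace ℝ (Fin (m + 1))) : ℝ :=
  -(p 0 * q 0) + ∑ j : Fin m, p j.succ * q j.succ

/-- `ω_r(p⃗) = √(|p⃗|² + r)`. -/
def omg {m : ℕ} (r : ℝ) (v : EuclideanSpace ℝ (Fin m)) : ℝ :=
  Real.sqrt (‖v‖ ^ 2 + r)

/-- Embedding of `ℝ^m` onto the forward mass shell: `p⃗ ↦ (ω_r(p⃗), p⃗)`. -/
def embed {m : ℕ} (r : ℝ) (v : EuclideanSpace ℝ (Fin m)) :
    EuclideanSpace ℝ (Fin (m + 1)) :=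
  WithLp.toLp 2 (Fin.cons (omg r v) (WithLp.ofLp v) : Fin (m + 1) → ℝ)

/-- The forward mass-shell measure `μ_r^+`: pushforward under `embed r` of the measure
with density `(2 ω_r(p⃗))⁻¹` with respect to Lebesgue measure on `ℝ^m`. -/
def massShellMeasure (m : ℕ) (r : ℝ) : Measure (EuclideanSpace ℝ (Fin (m + 1))) :=
  Measure.map (embed r)
    (volume.withDensity fun v => ENNReal.ofReal ((2 * omg r v)⁻¹))

open Matrix WithLp Set

/-!
Write `Λ = toEuclideanLin L`. Being orthochronous, `Λ` maps the forward sheet `V_r⁺` bijectively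
onto itself, so `Λ ∘ embed r = embed r ∘ φ` for a bijection `φ = shellMap L r` of `ℝ^m`, and the
theorem reduces to the invariance of the density `(2ω)⁻¹` under `φ`; by the change of variables
formula this is the Jacobian identity `|det Dφ(v)| = ω(φ v) / ω(v)`.

The matrix of `Dφ(v)` is the lower-right block of `K = L S`, where the shear
`S (t, w) = (t + ⟪v, w⟫ / ω, w)` sends `(0, w)` to a tangent vector of the shell at `x = embed r v`,
i.e. to a vector `η`-orthogonal to `x`. Hence `η(Λx, K w) = η(x, S w) = -ω w⁰`, and Cramer's rule
turns this into `ω · det Dφ(v) = (Λx)⁰ · det K = ω(φ v) · det L`, where `det L = ±1`.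
-/

theorem Matrix.mul_det_submatrix_succ_succ {R : Type*} [CommRing R] {n : ℕ}
    (K : Matrix (Fin (n + 1)) (Fin (n + 1)) R) (y : Fin (n + 1) → R) (c : R)
    (h : ∀ w, y ⬝ᵥ (K *ᵥ w) = c * w 0) :
    c * (K.submatrix Fin.succ Fin.succ).det = y 0 * K.det := by
  have hadj : K.adjugate 0 0 = (K.submatrix Fin.succ Fin.succ).det := by
    simp [adjugate_fin_succ_eq_det_submatrix]
  have h₀ := h (K.adjugate *ᵥ Pi.single 0 1)
  rw [mulVec_mulVec, mul_adjugate, smul_mulVec, one_mulVec, dotProduct_smul, dotProduct_single_one,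
    mulVec_single_one] at h₀
  simpa [hadj, mul_comm] using h₀.symm

theorem Matrix.tail_mulVec_cons {R : Type*} [CommRing R] {n : ℕ}
    (K : Matrix (Fin (n + 1)) (Fin (n + 1)) R) (t : R) (w : Fin n → R) :
    Fin.tail (K *ᵥ Fin.cons t w) = K.submatrix Fin.succ Fin.succ *ᵥ w + t • fun i => K i.succ 0 := by
  ext i
  simp [Fin.tail, mulVec, dotProduct, Fin.sum_univ_succ, mul_comm, add_comm]

section

variable {m : ℕ}

section Minkowski

def minkowskiMatrix (m : ℕ) : Matrix (Fin (m + 1)) (Fin (m + 1)) ℝ :=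
  diagonal (Fin.cons (-1) 1)

lemma det_minkowskiMatrix : (minkowskiMatrix m).det = -1 := by
  simp [minkowskiMatrix, det_diagonal, Fin.prod_univ_succ]

lemma eta_eq_dotProduct (p q : EuclideanSpace ℝ (Fin (m + 1))) :
    eta p q = (minkowskiMatrix m *ᵥ ofLp p) ⬝ᵥ ofLp q := by
  simp [eta, minkowskiMatrix, dotProduct, Fin.sum_univ_succ, mulVec_diagonal]

lemma eta_toLp_cons (a b : ℝ) (x y : Fin m → ℝ) :
    eta (toLp 2 (Fin.cons a x : Fin (m + 1) → ℝ)) (toLp 2 (Fin.cons b y)) = -(a * b) + x ⬝ᵥ y :=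
  rfl

lemma eta_neg_self (p : EuclideanSpace ℝ (Fin (m + 1))) : eta (-p) (-p) = eta p p := by
  simp [eta_eq_dotProduct, mulVec_neg]

lemma eta_toEuclideanLin (L : Matrix (Fin (m + 1)) (Fin (m + 1)) ℝ)
    (p q : EuclideanSpace ℝ (Fin (m + 1))) :
    eta (toEuclideanLin L p) (toEuclideanLin L q)
      = ((Lᵀ * minkowskiMatrix m * L) *ᵥ ofLp p) ⬝ᵥ ofLp q := by
  rw [eta_eq_dotProduct, toLpLin_apply, toLpLin_apply, dotProduct_mulVec, ← mulVec_transpose,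
    mulVec_mulVec, mulVec_mulVec]

end Minkowski

section Shell

def spatial (p : EuclideanSpace ℝ (Fin (m + 1))) : EuclideanSpace ℝ (Fin m) :=
  toLp 2 (Fin.tail (ofLp p))

def forwardShell (m : ℕ) (r : ℝ) : Set (EuclideanSpace ℝ (Fin (m + 1))) :=
  {p | eta p p = -r ∧ 0 < p 0}

variable {r : ℝ}

lemma omg_pos (hr : 0 < r) (v : EuclideanSpace ℝ (Fin m)) : 0 < omg r v := by
  unfold omg
  positivity

lemma sq_omg (hr : 0 < r) (v : EuclideanSpace ℝ (Fin m)) : omg r v ^ 2 = ‖v‖ ^ 2 + r :=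
  Real.sq_sqrt (by positivity)

@[simp] lemma embed_zero (v : EuclideanSpace ℝ (Fin m)) : embed r v 0 = omg r v := rfl

@[simp] lemma spatial_embed (v : EuclideanSpace ℝ (Fin m)) : spatial (embed r v) = v := rfl

lemma eta_self (p : EuclideanSpace ℝ (Fin (m + 1))) : eta p p = ‖spatial p‖ ^ 2 - p 0 ^ 2 := by
  rw [EuclideanSpace.real_norm_sq_eq, eta]
  simp only [spatial, Fin.tail, PiLp.toLp_apply, sq]
  ring

lemma embed_mem_forwardShell (hr : 0 < r) (v : EuclideanSpace ℝ (Fin m)) :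
    embed r v ∈ forwardShell m r := by
  refine ⟨?_, omg_pos hr v⟩
  rw [eta_self, spatial_embed, embed_zero, sq_omg hr]
  ring

lemma embed_spatial {p : EuclideanSpace ℝ (Fin (m + 1))} (hp : p ∈ forwardShell m r) :
    embed r (spatial p) = p := by
  have h0 : p 0 = omg r (spatial p) := by
    rw [omg, ← Real.sqrt_sq hp.2.le]
    congr 1
    linarith [eta_self p, hp.1]
  ext i
  refine Fin.cases ?_ (fun j => ?_) i
  · exact h0.symm
  · rfl

lemma continuous_embed (r : ℝ) : Continuous (embed r (m := m)) := by
  unfold embed omg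
  fun_prop

lemma hasFDerivAt_omg (hr : 0 < r) (v : EuclideanSpace ℝ (Fin m)) :
    HasFDerivAt (omg r) ((omg r v)⁻¹ • innerSL ℝ v) v := by
  refine (((hasFDerivAt_id v).norm_sq.add_const r).sqrt (by positivity)).congr_fderiv ?_
  ext w
  simp only [omg, id_eq, ContinuousLinearMap.comp_id, _root_.smul_apply, coe_innerSL_apply,
    nsmul_eq_mul, Nat.cast_ofNat, smul_eq_mul]
  field_simp

end Shell

def IsLorentz (L : Matrix (Fin (m + 1)) (Fin (m + 1)) ℝ) : Prop :=
  ∀ p q, eta (toEuclideanLin L p) (toEuclideanLin L q) = eta p q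

def IsOrthochronous (L : Matrix (Fin (m + 1)) (Fin (m + 1)) ℝ) : Prop :=
  ∀ p, eta p p < 0 → 0 < p 0 → 0 < toEuclideanLin L p 0

def shellMap (L : Matrix (Fin (m + 1)) (Fin (m + 1)) ℝ) (r : ℝ) (v : EuclideanSpace ℝ (Fin m)) :
    EuclideanSpace ℝ (Fin m) :=
  spatial (toEuclideanLin L (embed r v))

section Lorentz

variable {L : Matrix (Fin (m + 1)) (Fin (m + 1)) ℝ} {r : ℝ}

lemma IsLorentz.transpose_mul_minkowskiMatrix_mul (hL : IsLorentz L) :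
    Lᵀ * minkowskiMatrix m * L = minkowskiMatrix m := by
  ext i j
  have h := hL (EuclideanSpace.single j 1) (EuclideanSpace.single i 1)
  rw [eta_toEuclideanLin, eta_eq_dotProduct] at h
  simpa [mulVec_single_one, dotProduct_single_one] using h

lemma IsLorentz.det_sq (hL : IsLorentz L) : L.det ^ 2 = 1 := by
  have h := congrArg det hL.transpose_mul_minkowskiMatrix_mul
  rw [det_mul, det_mul, det_transpose, det_minkowskiMatrix] at h
  linear_combination -h

lemma IsLorentz.abs_det (hL : IsLorentz L) : |L.det| = 1 :=
  (pow_eq_one_iff_of_nonneg (abs_nonneg _) two_ne_zero).mp (by rw [sq_abs, hL.det_sq])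

lemma IsLorentz.bijective (hL : IsLorentz L) : Function.Bijective (toEuclideanLin L) := by
  refine (Module.End.isUnit_iff _).mp ((LinearMap.isUnit_iff_isUnit_det _).mpr ?_)
  rw [LinearMap.det_toLpLin, isUnit_iff_ne_zero, ← abs_pos, hL.abs_det]
  exact one_pos

lemma mapsTo_forwardShell (hr : 0 < r) (hL : IsLorentz L) (hL0 : IsOrthochronous L) :
    MapsTo (toEuclideanLin L) (forwardShell m r) (forwardShell m r) := fun p hp =>
  ⟨(hL p p).trans hp.1, hL0 p (by linarith [hp.1]) hp.2⟩

lemma surjOn_forwardShell (hr : 0 < r) (hL : IsLorentz L) (hL0 : IsOrthochronous L) :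
    SurjOn (toEuclideanLin L) (forwardShell m r) (forwardShell m r) := by
  intro q hq
  obtain ⟨p, rfl⟩ := hL.bijective.2 q
  have hpp : eta p p = -r := (hL p p).symm.trans hq.1
  refine ⟨p, ⟨hpp, ?_⟩, rfl⟩
  by_contra! hp0
  have hp0' : p 0 ≠ 0 := fun h => by nlinarith [eta_self p, h]
  -- otherwise `-p` would be a forward timelike vector with `(Λ (-p))⁰ = -q⁰ < 0`
  have hneg := hL0 (-p) (by rw [eta_neg_self, hpp]; linarith)
    (by simpa using lt_of_le_of_ne hp0 hp0')
  simp only [map_neg, PiLp.neg_apply] at hneg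
  linarith [hq.2]

lemma embed_shellMap (hr : 0 < r) (hL : IsLorentz L) (hL0 : IsOrthochronous L)
    (v : EuclideanSpace ℝ (Fin m)) :
    embed r (shellMap L r v) = toEuclideanLin L (embed r v) :=
  embed_spatial (mapsTo_forwardShell hr hL hL0 (embed_mem_forwardShell hr v))

lemma bijective_shellMap (hr : 0 < r) (hL : IsLorentz L) (hL0 : IsOrthochronous L) :
    Function.Bijective (shellMap L r (m := m)) := by
  refine ⟨fun v w h => ?_, fun w => ?_⟩
  · have h' := congrArg (embed r) h
    rw [embed_shellMap hr hL hL0, embed_shellMap hr hL hL0] at h'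
    simpa using congrArg spatial (hL.bijective.1 h')
  · obtain ⟨p, hp, hpw⟩ := surjOn_forwardShell hr hL hL0 (embed_mem_forwardShell hr w)
    refine ⟨spatial p, ?_⟩
    rw [shellMap, embed_spatial hp, hpw, spatial_embed]

lemma continuous_shellMap (L : Matrix (Fin (m + 1)) (Fin (m + 1)) ℝ) (r : ℝ) :
    Continuous (shellMap L r) := by
  unfold shellMap spatial embed omg
  fun_prop

end Lorentz

section Jacobian

def tangentShear (u : Fin m → ℝ) : Matrix (Fin (m + 1)) (Fin (m + 1)) ℝ :=
  (1 : Matrix (Fin (m + 1)) (Fin (m + 1)) ℝ).updateRow 0 (Fin.cons 1 u)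

lemma tangentShear_mulVec_cons (u : Fin m → ℝ) (t : ℝ) (w : Fin m → ℝ) :
    tangentShear u *ᵥ Fin.cons t w = Fin.cons (t + u ⬝ᵥ w) w := by
  ext i
  refine Fin.cases ?_ (fun j => ?_) i
  · simp [tangentShear, mulVec, dotProduct, Fin.sum_univ_succ]
  · simp [tangentShear, mulVec, dotProduct, one_apply]

lemma det_tangentShear (u : Fin m → ℝ) : (tangentShear u).det = 1 := by
  rw [det_of_isUpperTriangular]
  · refine Finset.prod_eq_one fun i _ => ?_
    refine Fin.cases ?_ (fun j => ?_) i <;> simp [tangentShear]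
  · intro i j (hji : j < i)
    have hi : i ≠ 0 := Fin.pos_iff_ne_zero.mp (j.zero_le.trans_lt hji)
    simp [tangentShear, hi, one_apply, hji.ne']

def shellJacobian (L : Matrix (Fin (m + 1)) (Fin (m + 1)) ℝ) (r : ℝ)
    (v : EuclideanSpace ℝ (Fin m)) : Matrix (Fin m) (Fin m) ℝ :=
  (L * tangentShear ((omg r v)⁻¹ • ofLp v)).submatrix Fin.succ Fin.succ

variable (L : Matrix (Fin (m + 1)) (Fin (m + 1)) ℝ) {r : ℝ}

lemma shellMap_eq (v : EuclideanSpace ℝ (Fin m)) :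
    shellMap L r v = toEuclideanLin (L.submatrix Fin.succ Fin.succ) v
      + omg r v • toLp 2 (fun i => L i.succ 0) := by
  rw [shellMap, spatial, embed, toLpLin_apply, tail_mulVec_cons]
  rfl

lemma toEuclideanLin_shellJacobian (v w : EuclideanSpace ℝ (Fin m)) :
    toEuclideanLin (shellJacobian L r v) w = toEuclideanLin (L.submatrix Fin.succ Fin.succ) w
      + ((omg r v)⁻¹ * inner ℝ v w) • toLp 2 (fun i => L i.succ 0) := by
  have h := tail_mulVec_cons (L * tangentShear ((omg r v)⁻¹ • ofLp v)) 0 (ofLp w)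
  rw [zero_smul, add_zero, ← mulVec_mulVec, tangentShear_mulVec_cons, zero_add,
    tail_mulVec_cons] at h
  rw [toLpLin_apply, shellJacobian, ← h, toLpLin_apply]
  simp [EuclideanSpace.inner_eq_star_dotProduct, dotProduct_comm]

lemma hasFDerivAt_shellMap (hr : 0 < r) (v : EuclideanSpace ℝ (Fin m)) :
    HasFDerivAt (shellMap L r) (toEuclideanLin (shellJacobian L r v)).toContinuousLinearMap v := by
  have h := (toEuclideanLin (L.submatrix Fin.succ Fin.succ)).toContinuousLinearMap.hasFDerivAt.add
    ((hasFDerivAt_omg hr v).smul_const (toLp 2 (fun i => L i.succ 0)))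
  rw [show shellMap L r = _ from funext (shellMap_eq L)]
  refine h.congr_fderiv ?_
  ext1 w
  simp [toEuclideanLin_shellJacobian]

variable {L}

lemma omg_mul_det_shellJacobian (hr : 0 < r) (hL : IsLorentz L) (v : EuclideanSpace ℝ (Fin m)) :
    omg r v * (shellJacobian L r v).det = toEuclideanLin L (embed r v) 0 * L.det := by
  set u := (omg r v)⁻¹ • ofLp v
  set y := minkowskiMatrix m *ᵥ ofLp (toEuclideanLin L (embed r v))
  have hy : ∀ w, y ⬝ᵥ ((L * tangentShear u) *ᵥ w) = -omg r v * w 0 := by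
    intro w
    obtain ⟨t, w', rfl⟩ : ∃ t w', w = Fin.cons t w' :=
      ⟨w 0, Fin.tail w, (Fin.cons_self_tail w).symm⟩
    calc y ⬝ᵥ ((L * tangentShear u) *ᵥ Fin.cons t w')
        = eta (toEuclideanLin L (embed r v))
            (toEuclideanLin L (toLp 2 (Fin.cons (t + u ⬝ᵥ w') w'))) := by
          rw [← mulVec_mulVec, tangentShear_mulVec_cons, eta_eq_dotProduct]
          rfl
      _ = -(omg r v * (t + u ⬝ᵥ w')) + ofLp v ⬝ᵥ w' := (hL _ _).trans (eta_toLp_cons _ _ _ _)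
      _ = -omg r v * (Fin.cons t w' : Fin (m + 1) → ℝ) 0 := by
          have := (omg_pos hr v).ne'
          simp only [u, smul_dotProduct, smul_eq_mul, Fin.cons_zero]
          field_simp
          ring
  have key := mul_det_submatrix_succ_succ _ y _ hy
  rw [det_mul, det_tangentShear, mul_one] at key
  have hy0 : y 0 = -toEuclideanLin L (embed r v) 0 := by
    simp only [y, minkowskiMatrix, mulVec_diagonal]
    simp
  change omg r v * ((L * tangentShear u).submatrix Fin.succ Fin.succ).det = _
  rw [hy0] at key
  linarith

lemma abs_det_shellJacobian (hr : 0 < r) (hL : IsLorentz L) (hL0 : IsOrthochronous L)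
    (v : EuclideanSpace ℝ (Fin m)) :
    |(shellJacobian L r v).det| = omg r (shellMap L r v) / omg r v := by
  have hω := omg_pos hr v
  have h0 : toEuclideanLin L (embed r v) 0 = omg r (shellMap L r v) := by
    rw [← embed_shellMap hr hL hL0, embed_zero]
  rw [eq_div_iff hω.ne', mul_comm, ← abs_of_pos hω, ← abs_mul, omg_mul_det_shellJacobian hr hL v,
    abs_mul, hL.abs_det, h0, abs_of_pos (omg_pos hr _), mul_one]

end Jacobian

lemma map_shellMap_withDensity {L : Matrix (Fin (m + 1)) (Fin (m + 1)) ℝ} {r : ℝ} (hr : 0 < r)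
    (hL : IsLorentz L) (hL0 : IsOrthochronous L) :
    Measure.map (shellMap L r) (volume.withDensity fun v => ENNReal.ofReal ((2 * omg r v)⁻¹))
      = volume.withDensity fun v => ENNReal.ofReal ((2 * omg r v)⁻¹) := by
  have hmeas := (continuous_shellMap L r).measurable
  ext s hs
  rw [Measure.map_apply hmeas hs, withDensity_apply _ (hmeas hs), withDensity_apply _ hs]
  conv_rhs => rw [← image_preimage_eq s (bijective_shellMap hr hL hL0).2]
  rw [lintegral_image_eq_lintegral_abs_det_fderiv_mul volume (hmeas hs)
    (fun v _ => (hasFDerivAt_shellMap L hr v).hasFDerivWithinAt)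
    (bijective_shellMap hr hL hL0).1.injOn]
  refine setLIntegral_congr_fun (hmeas hs) fun v _ => ?_
  have hω := omg_pos hr v
  have hω' := omg_pos hr (shellMap L r v)
  rw [ContinuousLinearMap.det, LinearMap.coe_toContinuousLinearMap, LinearMap.det_toLpLin,
    abs_det_shellJacobian hr hL hL0, ← ENNReal.ofReal_mul (by positivity)]
  congr 1
  field_simp

end

theorem statement0_general (m : ℕ) (r : ℝ) (hr : 0 < r)
    (Λ : EuclideanSpace ℝ (Fin (m + 1)) →ₗ[ℝ] EuclideanSpace ℝ (Fin (m + 1)))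
    (hη : ∀ p q, eta (Λ p) (Λ q) = eta p q)
    (horth : ∀ p, eta p p < 0 → 0 < p 0 → 0 < (Λ p) 0) :
    Measure.map (⇑Λ) (massShellMeasure m r) = massShellMeasure m r := by
  obtain ⟨L, rfl⟩ := toEuclideanLin.surjective Λ
  have hΛ : ⇑(toEuclideanLin L) ∘ embed r = embed r ∘ shellMap L r :=
    funext fun v => (embed_shellMap hr hη horth v).symm
  rw [massShellMeasure,
    Measure.map_map (toEuclideanLin L).continuous_of_finiteDimensional.measurable
      (continuous_embed r).measurable,
    hΛ, ← Measure.map_map (continuous_embed r).measurable (continuous_shellMap L r).measurable,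
    map_shellMap_withDensity hr hη horth]

/-- Lorentz invariance of the forward mass-shell measure. -/
theorem statement0 (m : ℕ) (hm : 1 ≤ m) (r : ℝ) (hr : 0 < r)
    (Λ : EuclideanSpace ℝ (Fin (m + 1)) →ₗ[ℝ] EuclideanSpace ℝ (Fin (m + 1)))
    (hη : ∀ p q, eta (Λ p) (Λ q) = eta p q)
    (horth : ∀ p, eta p p < 0 → 0 < p 0 → 0 < (Λ p) 0) :
    Measure.map (⇑Λ) (massShellMeasure m r) = massShellMeasure m r :=
  statement0_general m r hr Λ hη horth
end
end

section
/- Let d ≥ 2, r > 0, and let q ∈ V_r^+. Then there exist an open set U ⊆ ℝ^d containing q and a map s from ℝ^d to the d × d real matrices which is smooth (infinitely differentiable) on U, such that for every p ∈ U ∩ V_r^+ the matrix s(p) satisfies η(s(p)v, s(p)w) = η(v, w) for all v, w ∈ ℝ^d and s(p) q = p. That is, there is a smooth local family of Lorentz transformations p ↦ Λ(p, q) with Λ(p, q) q = p. -/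
noncomputable section

namespace Stmt7Aux

/-- metric signs -/
def g (m : ℕ) (j : Fin (m + 1)) : ℝ := if j = 0 then -1 else 1

/-- Minkowski form written as a single sum. -/
def E {m : ℕ} (x y : Fin (m + 1) → ℝ) : ℝ := ∑ j, g m j * x j * y j

lemma eta_eq_E {m : ℕ} (x y : EuclideanSpace ℝ (Fin (m + 1))) : eta x y = E x y := by
  unfold eta E g
  rw [Fin.sum_univ_succ]
  simp [Fin.succ_ne_zero]

lemma E_comm {m : ℕ} (x y : Fin (m + 1) → ℝ) : E x y = E y x :=
  Finset.sum_congr rfl fun j _ => by ring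

lemma E_add_left {m : ℕ} (x y z : Fin (m + 1) → ℝ) :
    E (fun i => x i + y i) z = E x z + E y z := by
  unfold E
  rw [← Finset.sum_add_distrib]
  exact Finset.sum_congr rfl fun j _ => by ring

lemma E_expand' {m : ℕ} (a b a' b' : ℝ) (p q v w : Fin (m + 1) → ℝ) :
    E (fun i => v i + a * (p i + q i) + b * p i)
      (fun i => w i + a' * (p i + q i) + b' * p i)
      = E v w + a' * (E v p + E v q) + b' * E v p
        + a * (E p w + E q w) + a * a' * (E p p + E p q + E q p + E q q)
        + a * b' * (E p p + E q p)
        + b * E p w + b * a' * (E p p + E p q) + b * b' * E p p := by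
  unfold E
  simp only [Finset.mul_sum, ← Finset.sum_add_distrib]
  exact Finset.sum_congr rfl fun j _ => by ring

/-- the matrix family -/
def sM {m : ℕ} (r : ℝ) (q p : EuclideanSpace ℝ (Fin (m + 1))) :
    Matrix (Fin (m + 1)) (Fin (m + 1)) ℝ := fun i j =>
  (if j = i then (1 : ℝ) else 0)
    + (p i + q i) * (g m j * (p j + q j)) / (r - eta p q)
    - 2 / r * (p i * (g m j * q j))

lemma mulVec_sM {m : ℕ} (r : ℝ) (q p : EuclideanSpace ℝ (Fin (m + 1)))
    (x : Fin (m + 1) → ℝ) (i : Fin (m + 1)) :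
    (sM r q p).mulVec x i
      = x i + (E (fun k => p k + q k) x / (r - eta p q)) * (p i + q i)
          + (-(2 / r) * E q x) * p i := by
  have split : ∀ j, sM r q p i j * x j
      = (if j = i then x j else 0)
        + (p i + q i) / (r - eta p q) * (g m j * (p j + q j) * x j)
        - 2 / r * p i * (g m j * q j * x j) := by
    intro j
    unfold sM
    split <;> ring
  simp only [Matrix.mulVec, dotProduct]
  rw [Finset.sum_congr rfl fun j _ => split j]
  rw [Finset.sum_sub_distrib, Finset.sum_add_distrib, ← Finset.mul_sum, ← Finset.mul_sum]
  simp only [Finset.sum_ite_eq', Finset.mem_univ, if_true]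
  simp only [E]
  ring

lemma coord_smooth {m : ℕ} (k : Fin (m + 1)) :
    ContDiff ℝ (⊤ : WithTop ℕ∞) (fun p : EuclideanSpace ℝ (Fin (m + 1)) => p k) :=
  (EuclideanSpace.proj (𝕜 := ℝ) (ι := Fin (m + 1)) k).contDiff

lemma eta_smooth {m : ℕ} (q : EuclideanSpace ℝ (Fin (m + 1))) :
    ContDiff ℝ (⊤ : WithTop ℕ∞) (fun p : EuclideanSpace ℝ (Fin (m + 1)) => eta p q) := by
  unfold eta
  exact (((coord_smooth 0).mul contDiff_const).neg).add
    (ContDiff.sum fun j _ => (coord_smooth j.succ).mul contDiff_const)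

end Stmt7Aux

open Stmt7Aux in
/-- Existence of a smooth local family of Lorentz transformations `p ↦ Λ(p,q)` on a
neighborhood `U` of a point `q` of the forward mass shell, with `Λ(p,q) q = p`. -/
theorem statement7 (m : ℕ) (hm : 1 ≤ m) (r : ℝ) (hr : 0 < r)
    (q : EuclideanSpace ℝ (Fin (m + 1))) (hq : eta q q = -r) (hq0 : 0 < q 0) :
    ∃ U : Set (EuclideanSpace ℝ (Fin (m + 1))), IsOpen U ∧ q ∈ U ∧
      ∃ s : EuclideanSpace ℝ (Fin (m + 1)) → Matrix (Fin (m + 1)) (Fin (m + 1)) ℝ,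
        (∀ i j, ContDiffOn ℝ (⊤ : ℕ∞) (fun p => s p i j) U) ∧
        ∀ p ∈ U, eta p p = -r → 0 < p 0 →
          (∀ v w : EuclideanSpace ℝ (Fin (m + 1)),
              eta (WithLp.toLp 2 ((s p).mulVec v) : EuclideanSpace ℝ (Fin (m + 1)))
                  (WithLp.toLp 2 ((s p).mulVec w) : EuclideanSpace ℝ (Fin (m + 1))) = eta v w) ∧
          (WithLp.toLp 2 ((s p).mulVec q) : EuclideanSpace ℝ (Fin (m + 1))) = p := by
  refine ⟨{p | eta p q < 0}, ?_, ?_, sM r q, ?_, ?_⟩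
  · exact isOpen_lt (eta_smooth q).continuous continuous_const
  · simp only [Set.mem_setOf_eq, hq]; linarith
  · intro i j
    have hden : ∀ p ∈ {p : EuclideanSpace ℝ (Fin (m + 1)) | eta p q < 0},
        r - eta p q ≠ 0 := by
      intro p hp
      simp only [Set.mem_setOf_eq] at hp
      linarith
    have h1 : ContDiff ℝ (⊤ : WithTop ℕ∞)
        (fun p : EuclideanSpace ℝ (Fin (m + 1)) => (p i + q i) * (g m j * (p j + q j))) :=
      ((coord_smooth i).add contDiff_const).mul
        (contDiff_const.mul ((coord_smooth j).add contDiff_const))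
    have h2 : ContDiff ℝ (⊤ : WithTop ℕ∞)
        (fun p : EuclideanSpace ℝ (Fin (m + 1)) => r - eta p q) :=
      contDiff_const.sub (eta_smooth q)
    have h3 : ContDiff ℝ (⊤ : WithTop ℕ∞)
        (fun p : EuclideanSpace ℝ (Fin (m + 1)) => 2 / r * (p i * (g m j * q j))) :=
      contDiff_const.mul ((coord_smooth i).mul contDiff_const)
    have hall : ContDiffOn ℝ (⊤ : WithTop ℕ∞)
        (fun p : EuclideanSpace ℝ (Fin (m + 1)) =>
          (if j = i then (1 : ℝ) else 0)
            + (p i + q i) * (g m j * (p j + q j)) / (r - eta p q)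
            - 2 / r * (p i * (g m j * q j))) {p | eta p q < 0} :=
      (contDiffOn_const.add ((h1.contDiffOn).div (h2.contDiffOn) hden)).sub h3.contDiffOn
    exact hall.of_le le_top
  · intro p hp hpp hp0
    simp only [Set.mem_setOf_eq] at hp
    have hD : r - E (m := m) p q ≠ 0 := by
      rw [← eta_eq_E]; linarith
    have hrne : r ≠ 0 := ne_of_gt hr
    have hEpp : E (m := m) p p = -r := by rw [← eta_eq_E]; exact hpp
    have hEqq : E (m := m) q q = -r := by rw [← eta_eq_E]; exact hq
    constructor
    · intro v w
      have hv : ((sM r q p).mulVec v : Fin (m + 1) → ℝ)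
          = fun i => v i
              + (E (fun k => p k + q k) v / (r - eta p q)) * (p i + q i)
              + (-(2 / r) * E q v) * p i := funext fun i => mulVec_sM r q p v i
      have hw : ((sM r q p).mulVec w : Fin (m + 1) → ℝ)
          = fun i => w i
              + (E (fun k => p k + q k) w / (r - eta p q)) * (p i + q i)
              + (-(2 / r) * E q w) * p i := funext fun i => mulVec_sM r q p w i
      rw [eta_eq_E (WithLp.toLp 2 ((sM r q p).mulVec v)) (WithLp.toLp 2 ((sM r q p).mulVec w)), eta_eq_E v w]
      rw [WithLp.ofLp_toLp, WithLp.ofLp_toLp]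
      rw [hv, hw, E_expand']
      rw [E_add_left p q v, E_add_left p q w, eta_eq_E p q]
      rw [hEpp, hEqq, E_comm q p, E_comm v p, E_comm v q]
      field_simp
      ring
    · ext i
      rw [WithLp.ofLp_toLp]
      rw [mulVec_sM r q p q i]
      rw [E_add_left p q q, eta_eq_E p q, hEqq]
      field_simp
      ring
end
end
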